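/- arXiv:1406.0463 — 2 statements merged into one kernel-verified Lean document; each statement's English description precedes it below -/
import Mathlib

section
/- For every finitely supported function q : ℤ → ℂ, Σ_{(n₁,n₂,n₃,n₄): n₁−n₂+n₃−n₄=0} q_{n₁}·conj(q_{n₂})·q_{n₃}·conj(q_{n₄}) = 2(Σ_n |q_n|²)² − Σ_n |q_n|⁴ + Σ_{(n₁,n₂,n₃,n₄): n₁−n₂+n₃−n₄=0, {n₁,n₃}∩{n₂,n₄}=∅} q_{n₁}·conj(q_{n₂})·q_{n₃}·conj(q_{n₄}), where the quadruple sums range over (n₁,n₂,n₃,n₄) ∈ ℤ⁴ satisfying the indicated conditions (all sums are finite since q is finitely supported). -/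
open ComplexConjugate

private lemma keyE1 (q : ℤ → ℂ) (s : Finset ℤ) :
    (∑ x ∈ (s ×ˢ s ×ˢ s ×ˢ s).filter
        (fun x : ℤ × ℤ × ℤ × ℤ => x.1 = x.2.1 ∧ x.2.2.1 = x.2.2.2),
      q x.1 * conj (q x.2.1) * q x.2.2.1 * conj (q x.2.2.2))
      = (∑ n ∈ s, q n * conj (q n)) ^ 2 := by
  rw [sq, Finset.sum_mul_sum, ← Finset.sum_product']
  apply Finset.sum_nbij' (i := fun x : ℤ × ℤ × ℤ × ℤ => (x.1, x.2.2.1))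
    (j := fun p : ℤ × ℤ => (p.1, p.1, p.2, p.2))
  · intro a ha
    simp only [Finset.mem_filter, Finset.mem_product] at ha ⊢
    tauto
  · intro a ha
    simp only [Finset.mem_filter, Finset.mem_product] at ha ⊢
    tauto
  · intro a ha
    simp only [Finset.mem_filter, Finset.mem_product] at ha
    obtain ⟨-, h1, h2⟩ := ha
    simp [Prod.ext_iff, h1, h2]
  · intro a _; rfl
  · intro a ha
    simp only [Finset.mem_filter, Finset.mem_product] at ha
    obtain ⟨-, h1, h2⟩ := ha
    rw [← h1, ← h2]; ring

private lemma keyE2 (q : ℤ → ℂ) (s : Finset ℤ) :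
    (∑ x ∈ (s ×ˢ s ×ˢ s ×ˢ s).filter
        (fun x : ℤ × ℤ × ℤ × ℤ => x.1 = x.2.2.2 ∧ x.2.2.1 = x.2.1),
      q x.1 * conj (q x.2.1) * q x.2.2.1 * conj (q x.2.2.2))
      = (∑ n ∈ s, q n * conj (q n)) ^ 2 := by
  rw [sq, Finset.sum_mul_sum, ← Finset.sum_product']
  apply Finset.sum_nbij' (i := fun x : ℤ × ℤ × ℤ × ℤ => (x.1, x.2.1))
    (j := fun p : ℤ × ℤ => (p.1, p.2, p.2, p.1))
  · intro a ha
    simp only [Finset.mem_filter, Finset.mem_product] at ha ⊢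
    tauto
  · intro a ha
    simp only [Finset.mem_filter, Finset.mem_product] at ha ⊢
    tauto
  · intro a ha
    simp only [Finset.mem_filter, Finset.mem_product] at ha
    obtain ⟨-, h1, h2⟩ := ha
    simp [Prod.ext_iff, h1, h2]
  · intro a _; rfl
  · intro a ha
    simp only [Finset.mem_filter, Finset.mem_product] at ha
    obtain ⟨-, h1, h2⟩ := ha
    rw [h1, h2]; ring

private lemma keyE3 (q : ℤ → ℂ) (s : Finset ℤ) :
    (∑ x ∈ (s ×ˢ s ×ˢ s ×ˢ s).filter
        (fun x : ℤ × ℤ × ℤ × ℤ =>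
          (x.1 = x.2.1 ∧ x.2.2.1 = x.2.2.2) ∧ (x.1 = x.2.2.2 ∧ x.2.2.1 = x.2.1)),
      q x.1 * conj (q x.2.1) * q x.2.2.1 * conj (q x.2.2.2))
      = ∑ n ∈ s, (q n * conj (q n)) ^ 2 := by
  apply Finset.sum_nbij' (i := fun x : ℤ × ℤ × ℤ × ℤ => x.1)
    (j := fun n : ℤ => (n, n, n, n))
  · intro a ha
    simp only [Finset.mem_filter, Finset.mem_product] at ha
    tauto
  · intro a ha
    simp only [Finset.mem_filter, Finset.mem_product]
    tauto
  · intro a ha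
    simp only [Finset.mem_filter, Finset.mem_product] at ha
    obtain ⟨-, ⟨h1, h2⟩, h3, h4⟩ := ha
    simp [Prod.ext_iff]; omega
  · intro a _; rfl
  · intro a ha
    simp only [Finset.mem_filter, Finset.mem_product] at ha
    obtain ⟨-, ⟨h1, h2⟩, h3, h4⟩ := ha
    rw [h2, ← h3, ← h1]; ring

private lemma keyFin (q : ℤ → ℂ) (s : Finset ℤ) :
    (∑ x ∈ (s ×ˢ s ×ˢ s ×ˢ s).filter
        (fun x : ℤ × ℤ × ℤ × ℤ => x.1 - x.2.1 + x.2.2.1 - x.2.2.2 = 0),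
      q x.1 * conj (q x.2.1) * q x.2.2.1 * conj (q x.2.2.2)) =
      2 * (∑ n ∈ s, q n * conj (q n)) ^ 2 - (∑ n ∈ s, (q n * conj (q n)) ^ 2) +
      ∑ x ∈ (s ×ˢ s ×ˢ s ×ˢ s).filter
        (fun x : ℤ × ℤ × ℤ × ℤ => x.1 - x.2.1 + x.2.2.1 - x.2.2.2 = 0 ∧
          x.1 ≠ x.2.1 ∧ x.1 ≠ x.2.2.2 ∧ x.2.2.1 ≠ x.2.1 ∧ x.2.2.1 ≠ x.2.2.2),
      q x.1 * conj (q x.2.1) * q x.2.2.1 * conj (q x.2.2.2) := by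
  classical
  have hsplit := Finset.sum_filter_add_sum_filter_not
    ((s ×ˢ s ×ˢ s ×ˢ s).filter
      (fun x : ℤ × ℤ × ℤ × ℤ => x.1 - x.2.1 + x.2.2.1 - x.2.2.2 = 0))
    (fun x : ℤ × ℤ × ℤ × ℤ =>
      x.1 ≠ x.2.1 ∧ x.1 ≠ x.2.2.2 ∧ x.2.2.1 ≠ x.2.1 ∧ x.2.2.1 ≠ x.2.2.2)
    (fun x : ℤ × ℤ × ℤ × ℤ => q x.1 * conj (q x.2.1) * q x.2.2.1 * conj (q x.2.2.2))
  rw [Finset.filter_filter, Finset.filter_filter] at hsplit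
  have hcongr : ((s ×ˢ s ×ˢ s ×ˢ s).filter (fun x : ℤ × ℤ × ℤ × ℤ =>
      x.1 - x.2.1 + x.2.2.1 - x.2.2.2 = 0 ∧
        ¬(x.1 ≠ x.2.1 ∧ x.1 ≠ x.2.2.2 ∧ x.2.2.1 ≠ x.2.1 ∧ x.2.2.1 ≠ x.2.2.2))) =
      (s ×ˢ s ×ˢ s ×ˢ s).filter (fun x : ℤ × ℤ × ℤ × ℤ =>
        (x.1 = x.2.1 ∧ x.2.2.1 = x.2.2.2) ∨ (x.1 = x.2.2.2 ∧ x.2.2.1 = x.2.1)) := by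
    apply Finset.filter_congr
    intro x _
    constructor
    · rintro ⟨h1, h2⟩
      push_neg at h2
      omega
    · intro h
      constructor
      · omega
      · push_neg
        omega
  have hunion : (∑ x ∈ (s ×ˢ s ×ˢ s ×ˢ s).filter (fun x : ℤ × ℤ × ℤ × ℤ =>
        (x.1 = x.2.1 ∧ x.2.2.1 = x.2.2.2) ∨ (x.1 = x.2.2.2 ∧ x.2.2.1 = x.2.1)),
          q x.1 * conj (q x.2.1) * q x.2.2.1 * conj (q x.2.2.2))
      = (∑ x ∈ (s ×ˢ s ×ˢ s ×ˢ s).filter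
            (fun x : ℤ × ℤ × ℤ × ℤ => x.1 = x.2.1 ∧ x.2.2.1 = x.2.2.2),
          q x.1 * conj (q x.2.1) * q x.2.2.1 * conj (q x.2.2.2))
        + (∑ x ∈ (s ×ˢ s ×ˢ s ×ˢ s).filter
            (fun x : ℤ × ℤ × ℤ × ℤ => x.1 = x.2.2.2 ∧ x.2.2.1 = x.2.1),
          q x.1 * conj (q x.2.1) * q x.2.2.1 * conj (q x.2.2.2))
        - (∑ x ∈ (s ×ˢ s ×ˢ s ×ˢ s).filter (fun x : ℤ × ℤ × ℤ × ℤ =>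
            (x.1 = x.2.1 ∧ x.2.2.1 = x.2.2.2) ∧ (x.1 = x.2.2.2 ∧ x.2.2.1 = x.2.1)),
          q x.1 * conj (q x.2.1) * q x.2.2.1 * conj (q x.2.2.2)) := by
    rw [Finset.filter_or]
    have h := Finset.sum_union_inter
      (s₁ := (s ×ˢ s ×ˢ s ×ˢ s).filter
        (fun x : ℤ × ℤ × ℤ × ℤ => x.1 = x.2.1 ∧ x.2.2.1 = x.2.2.2))
      (s₂ := (s ×ˢ s ×ˢ s ×ˢ s).filter
        (fun x : ℤ × ℤ × ℤ × ℤ => x.1 = x.2.2.2 ∧ x.2.2.1 = x.2.1))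
      (f := fun x : ℤ × ℤ × ℤ × ℤ => q x.1 * conj (q x.2.1) * q x.2.2.1 * conj (q x.2.2.2))
    rw [← Finset.filter_and] at h
    linear_combination h
  rw [← hsplit, hcongr, hunion, keyE1, keyE2, keyE3]
  ring

/-- For every finitely supported `q : ℤ → ℂ`,
`Σ_{n₁-n₂+n₃-n₄=0} q_{n₁} conj(q_{n₂}) q_{n₃} conj(q_{n₄})
 = 2 (Σ_n |q_n|²)² - Σ_n |q_n|⁴
   + Σ_{n₁-n₂+n₃-n₄=0, {n₁,n₃}∩{n₂,n₄}=∅} q_{n₁} conj(q_{n₂}) q_{n₃} conj(q_{n₄})`,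
where `|q_n|² = q_n conj(q_n)`. -/
theorem stmt12 (q : ℤ → ℂ) (hq : (Function.support q).Finite) :
    (∑' x : {x : ℤ × ℤ × ℤ × ℤ // x.1 - x.2.1 + x.2.2.1 - x.2.2.2 = 0},
        q x.1.1 * conj (q x.1.2.1) * q x.1.2.2.1 * conj (q x.1.2.2.2)) =
      2 * (∑' n : ℤ, q n * conj (q n)) ^ 2 - (∑' n : ℤ, (q n * conj (q n)) ^ 2) +
        ∑' x : {x : ℤ × ℤ × ℤ × ℤ // x.1 - x.2.1 + x.2.2.1 - x.2.2.2 = 0 ∧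
            x.1 ≠ x.2.1 ∧ x.1 ≠ x.2.2.2 ∧ x.2.2.1 ≠ x.2.1 ∧ x.2.2.1 ≠ x.2.2.2},
          q x.1.1 * conj (q x.1.2.1) * q x.1.2.2.1 * conj (q x.1.2.2.2) := by
  classical
  set s := hq.toFinset with hs
  have hmem : ∀ n : ℤ, n ∈ s ↔ q n ≠ 0 := by
    intro n; simp [hs, Function.mem_support]
  have hzero : ∀ x : ℤ × ℤ × ℤ × ℤ, x ∉ s ×ˢ s ×ˢ s ×ˢ s →
      q x.1 * conj (q x.2.1) * q x.2.2.1 * conj (q x.2.2.2) = 0 := by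
    intro x hx
    simp only [Finset.mem_product, hmem, not_and_or, not_not] at hx
    rcases hx with h | h | h | h <;> simp [h]
  have h1 : (∑' x : {x : ℤ × ℤ × ℤ × ℤ // x.1 - x.2.1 + x.2.2.1 - x.2.2.2 = 0},
        q x.1.1 * conj (q x.1.2.1) * q x.1.2.2.1 * conj (q x.1.2.2.2)) =
      ∑ x ∈ (s ×ˢ s ×ˢ s ×ˢ s).filter
        (fun x : ℤ × ℤ × ℤ × ℤ => x.1 - x.2.1 + x.2.2.1 - x.2.2.2 = 0),
      q x.1 * conj (q x.2.1) * q x.2.2.1 * conj (q x.2.2.2) := by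
    rw [tsum_eq_sum (s := (s ×ˢ s ×ˢ s ×ˢ s).subtype
        (fun x : ℤ × ℤ × ℤ × ℤ => x.1 - x.2.1 + x.2.2.1 - x.2.2.2 = 0))
      (f := fun x : {x : ℤ × ℤ × ℤ × ℤ // x.1 - x.2.1 + x.2.2.1 - x.2.2.2 = 0} =>
        q x.1.1 * conj (q x.1.2.1) * q x.1.2.2.1 * conj (q x.1.2.2.2))]
    · exact Finset.sum_subtype_eq_sum_filter
        (fun x : ℤ × ℤ × ℤ × ℤ => q x.1 * conj (q x.2.1) * q x.2.2.1 * conj (q x.2.2.2))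
    · intro b hb
      exact hzero b.1 (by simpa [Finset.mem_subtype] using hb)
  have h2 : (∑' x : {x : ℤ × ℤ × ℤ × ℤ // x.1 - x.2.1 + x.2.2.1 - x.2.2.2 = 0 ∧
            x.1 ≠ x.2.1 ∧ x.1 ≠ x.2.2.2 ∧ x.2.2.1 ≠ x.2.1 ∧ x.2.2.1 ≠ x.2.2.2},
        q x.1.1 * conj (q x.1.2.1) * q x.1.2.2.1 * conj (q x.1.2.2.2)) =
      ∑ x ∈ (s ×ˢ s ×ˢ s ×ˢ s).filter
        (fun x : ℤ × ℤ × ℤ × ℤ => x.1 - x.2.1 + x.2.2.1 - x.2.2.2 = 0 ∧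
          x.1 ≠ x.2.1 ∧ x.1 ≠ x.2.2.2 ∧ x.2.2.1 ≠ x.2.1 ∧ x.2.2.1 ≠ x.2.2.2),
      q x.1 * conj (q x.2.1) * q x.2.2.1 * conj (q x.2.2.2) := by
    rw [tsum_eq_sum (s := (s ×ˢ s ×ˢ s ×ˢ s).subtype
        (fun x : ℤ × ℤ × ℤ × ℤ => x.1 - x.2.1 + x.2.2.1 - x.2.2.2 = 0 ∧
          x.1 ≠ x.2.1 ∧ x.1 ≠ x.2.2.2 ∧ x.2.2.1 ≠ x.2.1 ∧ x.2.2.1 ≠ x.2.2.2))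
      (f := fun x : {x : ℤ × ℤ × ℤ × ℤ // x.1 - x.2.1 + x.2.2.1 - x.2.2.2 = 0 ∧
          x.1 ≠ x.2.1 ∧ x.1 ≠ x.2.2.2 ∧ x.2.2.1 ≠ x.2.1 ∧ x.2.2.1 ≠ x.2.2.2} =>
        q x.1.1 * conj (q x.1.2.1) * q x.1.2.2.1 * conj (q x.1.2.2.2))]
    · exact Finset.sum_subtype_eq_sum_filter
        (fun x : ℤ × ℤ × ℤ × ℤ => q x.1 * conj (q x.2.1) * q x.2.2.1 * conj (q x.2.2.2))
    · intro b hb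
      exact hzero b.1 (by simpa [Finset.mem_subtype] using hb)
  have h3 : (∑' n : ℤ, q n * conj (q n)) = ∑ n ∈ s, q n * conj (q n) := by
    apply tsum_eq_sum
    intro b hb
    have : q b = 0 := by simpa [hmem, not_not] using hb
    simp [this]
  have h4 : (∑' n : ℤ, (q n * conj (q n)) ^ 2) = ∑ n ∈ s, (q n * conj (q n)) ^ 2 := by
    apply tsum_eq_sum
    intro b hb
    have : q b = 0 := by simpa [hmem, not_not] using hb
    simp [this]
  rw [h1, h2, h3, h4]
  exact keyFin q s
end

section
/- Let S be a finite set. In the polynomial ring ℂ[x_n, y_n : n ∈ S], let G = Σ_{l∈S} (x_l y_l)². For any multi-indices 𝐦 = (m₁,…,m_l) ∈ S^l and 𝐧 = (k₁,…,k_L, p₁,…,p_L) ∈ S^{2L}, setting I_𝐦 = ∏_{j=1}^{l} x_{m_j} y_{m_j} and q_𝐧 = ∏_{i=1}^{L} x_{k_i} · ∏_{i=1}^{L} y_{p_i}, one has {I_𝐦 q_𝐧, G} = 2 (Σ_{i=1}^{L} x_{k_i} y_{k_i} − Σ_{i=1}^{L} x_{p_i} y_{p_i}) · I_𝐦 q_𝐧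 (the paper records this identity with the harmless constant factor suppressed; the exact identity carries the factor 2). -/
open MvPolynomial

noncomputable section

variable {S : Type*} [Fintype S] [DecidableEq S]

/-- The variable `x_n` (playing the role of the coordinate `q_n`). -/
def xv (n : S) : MvPolynomial (S ⊕ S) ℂ := X (Sum.inl n)

/-- The variable `y_n` (playing the role of the conjugate coordinate `q̄_n`). -/
def yv (n : S) : MvPolynomial (S ⊕ S) ℂ := X (Sum.inr n)

/-- The Poisson bracket
`{F, G} = Σ_{n ∈ S} (∂F/∂x_n ∂G/∂y_n - ∂F/∂y_n ∂G/∂x_n)` on `ℂ[x_n, y_n : n ∈ S]`. -/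
def pb (F G : MvPolynomial (S ⊕ S) ℂ) : MvPolynomial (S ⊕ S) ℂ :=
  ∑ n : S, (pderiv (Sum.inl n) F * pderiv (Sum.inr n) G -
    pderiv (Sum.inr n) F * pderiv (Sum.inl n) G)

/-- The monomial `I_𝐦 = ∏_j x_{m_j} y_{m_j}`. -/
def Imon {l : ℕ} (m : Fin l → S) : MvPolynomial (S ⊕ S) ℂ := ∏ j, (xv (m j) * yv (m j))

/-- The monomial `q_𝐧 = ∏_i x_{k_i} · ∏_i y_{p_i}`. -/
def qmon {L : ℕ} (k p : Fin L → S) : MvPolynomial (S ⊕ S) ℂ :=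
  (∏ i, xv (k i)) * ∏ i, yv (p i)

def Dop : Derivation ℂ (MvPolynomial (S ⊕ S) ℂ) (MvPolynomial (S ⊕ S) ℂ) :=
  mkDerivation ℂ (fun v => match v with
    | Sum.inl a => xv a * yv a * xv a
    | Sum.inr a => -(xv a * yv a * yv a))

lemma Dop_xv (a : S) : Dop (xv a) = xv a * yv a * xv a := by
  simp [Dop, xv, mkDerivation_X]

lemma Dop_yv (a : S) : Dop (yv a) = -(xv a * yv a * yv a) := by
  simp [Dop, yv, mkDerivation_X]

lemma pderiv_inl_G0 (a : S) :
    pderiv (Sum.inl a) (∑ n : S, (xv n * yv n) ^ 2) = 2 * (xv a * yv a) * yv a := by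
  rw [map_sum, Finset.sum_eq_single a]
  · simp [xv, yv, pderiv_X, Pi.single]
    ring
  · intro b _ hb
    simp [xv, yv, pderiv_X, Pi.single, hb, Sum.inl.injEq, (Ne.symm hb)]
  · simp

lemma pderiv_inr_G0 (a : S) :
    pderiv (Sum.inr a) (∑ n : S, (xv n * yv n) ^ 2) = 2 * (xv a * yv a) * xv a := by
  rw [map_sum, Finset.sum_eq_single a]
  · simp [xv, yv, pderiv_X, Pi.single]
    ring
  · intro b _ hb
    simp [xv, yv, pderiv_X, Pi.single, hb, Sum.inr.injEq, (Ne.symm hb)]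
  · simp

lemma pb_mul_left (F F' G : MvPolynomial (S ⊕ S) ℂ) :
    pb (F * F') G = pb F G * F' + F * pb F' G := by
  unfold pb
  rw [Finset.sum_mul, Finset.mul_sum, ← Finset.sum_add_distrib]
  refine Finset.sum_congr rfl fun n _ => ?_
  simp only [pderiv_mul]
  ring

lemma pb_key (F : MvPolynomial (S ⊕ S) ℂ) :
    pb F (∑ n : S, (xv n * yv n) ^ 2) = 2 * Dop F := by
  induction F using MvPolynomial.induction_on with
  | C a =>
      have : Dop (C a : MvPolynomial (S ⊕ S) ℂ) = 0 := by
        rw [← MvPolynomial.algebraMap_eq]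
        exact Derivation.map_algebraMap Dop a
      simp [pb, this]
  | add p q hp hq =>
      have : pb (p + q) (∑ n : S, (xv n * yv n) ^ 2) =
          pb p (∑ n : S, (xv n * yv n) ^ 2) + pb q (∑ n : S, (xv n * yv n) ^ 2) := by
        unfold pb
        rw [← Finset.sum_add_distrib]
        refine Finset.sum_congr rfl fun n _ => ?_
        simp only [map_add]
        ring
      rw [this, hp, hq, map_add]
      ring
  | mul_X p i hp =>
      have hX : pb (X i : MvPolynomial (S ⊕ S) ℂ) (∑ n : S, (xv n * yv n) ^ 2)
          = 2 * Dop (X i) := by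
        cases i with
        | inl a =>
            have h1 : pderiv (Sum.inl a) (X (Sum.inl a) : MvPolynomial (S ⊕ S) ℂ) = 1 :=
              pderiv_X_self _
            have h2 : pderiv (Sum.inr a) (X (Sum.inl a) : MvPolynomial (S ⊕ S) ℂ) = 0 :=
              pderiv_X_of_ne (by simp)
            unfold pb
            rw [Finset.sum_eq_single a]
            · rw [h1, h2, pderiv_inr_G0,
                show (X (Sum.inl a) : MvPolynomial (S ⊕ S) ℂ) = xv a from rfl, Dop_xv]
              ring
            · intro b _ hb
              rw [pderiv_X_of_ne (by simp [Ne.symm hb]),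
                pderiv_X_of_ne (by simp)]
              ring
            · simp
        | inr a =>
            have h1 : pderiv (Sum.inr a) (X (Sum.inr a) : MvPolynomial (S ⊕ S) ℂ) = 1 :=
              pderiv_X_self _
            have h2 : pderiv (Sum.inl a) (X (Sum.inr a) : MvPolynomial (S ⊕ S) ℂ) = 0 :=
              pderiv_X_of_ne (by simp)
            unfold pb
            rw [Finset.sum_eq_single a]
            · rw [h1, h2, pderiv_inl_G0,
                show (X (Sum.inr a) : MvPolynomial (S ⊕ S) ℂ) = yv a from rfl, Dop_yv]
              ring
            · intro b _ hb
              rw [pderiv_X_of_ne (by simp),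
                pderiv_X_of_ne (by simpa using Ne.symm hb)]
              ring
            · simp
      rw [pb_mul_left, hp, hX, Derivation.leibniz, smul_eq_mul, smul_eq_mul]
      ring

lemma Dop_prod_x {L : ℕ} (k : Fin L → S) :
    Dop (∏ i, xv (k i)) = (∑ i, xv (k i) * yv (k i)) * ∏ i, xv (k i) := by
  induction L with
  | zero => simp [Derivation.map_one_eq_zero]
  | succ n ih =>
      rw [Fin.prod_univ_succ, Fin.sum_univ_succ, Derivation.leibniz, smul_eq_mul, smul_eq_mul,
        ih (fun i => k i.succ), Dop_xv]
      ring

lemma Dop_prod_y {L : ℕ} (p : Fin L → S) :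
    Dop (∏ i, yv (p i)) = -((∑ i, xv (p i) * yv (p i)) * ∏ i, yv (p i)) := by
  induction L with
  | zero => simp [Derivation.map_one_eq_zero]
  | succ n ih =>
      rw [Fin.prod_univ_succ, Fin.sum_univ_succ, Derivation.leibniz, smul_eq_mul, smul_eq_mul,
        ih (fun i => p i.succ), Dop_yv]
      ring


lemma Dop_Imon {l : ℕ} (m : Fin l → S) : Dop (Imon m) = 0 := by
  unfold Imon
  induction l with
  | zero => simp [Derivation.map_one_eq_zero]
  | succ n ih =>
      rw [Fin.prod_univ_succ, Derivation.leibniz, smul_eq_mul, smul_eq_mul,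
        ih (fun i => m i.succ), Derivation.leibniz, smul_eq_mul, smul_eq_mul, Dop_xv, Dop_yv]
      ring


/-- Let `G = Σ_{l∈S} (x_l y_l)²`. For any multi-indices `𝐦 ∈ S^l` and `𝐧 = (k, p) ∈ S^{2L}`,
`{I_𝐦 q_𝐧, G} = 2 (Σ_i x_{k_i} y_{k_i} - Σ_i x_{p_i} y_{p_i}) · I_𝐦 q_𝐧`. -/
theorem stmt15 {l L : ℕ} (m : Fin l → S) (k p : Fin L → S) :
    pb (Imon m * qmon k p) (∑ n : S, (xv n * yv n) ^ 2) =
      2 * ((∑ i, xv (k i) * yv (k i)) - ∑ i, xv (p i) * yv (p i)) * (Imon m * qmon k p) := by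
  rw [pb_key, Derivation.leibniz, smul_eq_mul, smul_eq_mul, Dop_Imon]
  unfold qmon
  rw [Derivation.leibniz, smul_eq_mul, smul_eq_mul, Dop_prod_x, Dop_prod_y]
  unfold Imon
  ring

end
end
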